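/- arXiv:1305.4538 — 3 statements merged into one kernel-verified Lean document; each statement's English description precedes it below -/
import Mathlib

section
/- The function x̃ ↦ log X(e^{x̃}), where X(x) = a + ∏_{k=1}^n (1+x_k) − 1 with a > 0 and e^{x̃} = (e^{x̃_1},…,e^{x̃_n}), is convex on ℝ^n. -/
open Finset

/-- Log-convexity is preserved by addition of positive functions. -/
lemma logConvexOn_add {E : Type*} [AddCommGroup E] [Module ℝ E] {f g : E → ℝ}
    (hf0 : ∀ x, 0 < f x) (hg0 : ∀ x, 0 < g x)
    (hf : ConvexOn ℝ Set.univ fun x => Real.log (f x))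
    (hg : ConvexOn ℝ Set.univ fun x => Real.log (g x)) :
    ConvexOn ℝ Set.univ fun x => Real.log (f x + g x) := by
  refine ⟨convex_univ, ?_⟩
  intro x _ y _ t s ht hs hts
  set z := t • x + s • y with hz
  have hA : 0 < f x + g x := add_pos (hf0 x) (hg0 x)
  have hB : 0 < f y + g y := add_pos (hf0 y) (hg0 y)
  have hApos : 0 < (f x + g x) ^ t := Real.rpow_pos_of_pos hA t
  have hBpos : 0 < (f y + g y) ^ s := Real.rpow_pos_of_pos hB s
  -- log-convexity gives pointwise bound by geometric mean
  have key : ∀ (F : E → ℝ), (∀ u, 0 < F u) →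
      (ConvexOn ℝ Set.univ fun u => Real.log (F u)) →
      F z ≤ F x ^ t * F y ^ s := by
    intro F hF0 hF
    have h1 : Real.log (F z) ≤ t * Real.log (F x) + s * Real.log (F y) :=
      hF.2 (Set.mem_univ x) (Set.mem_univ y) ht hs hts
    have h2 : F z = Real.exp (Real.log (F z)) := (Real.exp_log (hF0 z)).symm
    rw [h2]
    calc Real.exp (Real.log (F z))
        ≤ Real.exp (t * Real.log (F x) + s * Real.log (F y)) := Real.exp_le_exp.2 h1
      _ = F x ^ t * F y ^ s := by
          rw [Real.exp_add, Real.rpow_def_of_pos (hF0 x), Real.rpow_def_of_pos (hF0 y),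
            mul_comm t _, mul_comm s _]
  have hfz : f z ≤ f x ^ t * f y ^ s := key f hf0 hf
  have hgz : g z ≤ g x ^ t * g y ^ s := key g hg0 hg
  -- two-term Hölder
  have holder : f x ^ t * f y ^ s + g x ^ t * g y ^ s ≤ (f x + g x) ^ t * (f y + g y) ^ s := by
    have h1 : (f x / (f x + g x)) ^ t * (f y / (f y + g y)) ^ s ≤
        t * (f x / (f x + g x)) + s * (f y / (f y + g y)) :=
      Real.geom_mean_le_arith_mean2_weighted ht hs
        (div_pos (hf0 x) hA).le (div_pos (hf0 y) hB).le hts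
    have h2 : (g x / (f x + g x)) ^ t * (g y / (f y + g y)) ^ s ≤
        t * (g x / (f x + g x)) + s * (g y / (f y + g y)) :=
      Real.geom_mean_le_arith_mean2_weighted ht hs
        (div_pos (hg0 x) hA).le (div_pos (hg0 y) hB).le hts
    have hsum := add_le_add h1 h2
    have hrhs : t * (f x / (f x + g x)) + s * (f y / (f y + g y)) +
        (t * (g x / (f x + g x)) + s * (g y / (f y + g y))) = 1 := by
      have heq : t * (f x / (f x + g x)) + s * (f y / (f y + g y)) +
          (t * (g x / (f x + g x)) + s * (g y / (f y + g y))) =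
          t * ((f x + g x) / (f x + g x)) + s * ((f y + g y) / (f y + g y)) := by ring
      rw [heq, div_self hA.ne', div_self hB.ne', mul_one, mul_one]
      exact hts
    rw [Real.div_rpow (hf0 x).le hA.le, Real.div_rpow (hf0 y).le hB.le,
      Real.div_rpow (hg0 x).le hA.le, Real.div_rpow (hg0 y).le hB.le] at hsum
    have hle1 : (f x ^ t * f y ^ s + g x ^ t * g y ^ s) /
        ((f x + g x) ^ t * (f y + g y) ^ s) ≤ 1 := by
      calc (f x ^ t * f y ^ s + g x ^ t * g y ^ s) / ((f x + g x) ^ t * (f y + g y) ^ s)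
          = f x ^ t / (f x + g x) ^ t * (f y ^ s / (f y + g y) ^ s) +
            g x ^ t / (f x + g x) ^ t * (g y ^ s / (f y + g y) ^ s) := by
            field_simp
          _ ≤ 1 := by rw [← hrhs]; exact hsum
    calc f x ^ t * f y ^ s + g x ^ t * g y ^ s
        = (f x ^ t * f y ^ s + g x ^ t * g y ^ s) / ((f x + g x) ^ t * (f y + g y) ^ s) *
          ((f x + g x) ^ t * (f y + g y) ^ s) :=
          (div_mul_cancel₀ _ (mul_pos hApos hBpos).ne').symm
      _ ≤ 1 * ((f x + g x) ^ t * (f y + g y) ^ s) :=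
          mul_le_mul_of_nonneg_right hle1 (mul_pos hApos hBpos).le
      _ = (f x + g x) ^ t * (f y + g y) ^ s := one_mul _
  -- conclude
  have hfinal : f z + g z ≤ (f x + g x) ^ t * (f y + g y) ^ s :=
    le_trans (add_le_add hfz hgz) holder
  calc Real.log (f z + g z) ≤ Real.log ((f x + g x) ^ t * (f y + g y) ^ s) :=
        Real.log_le_log (add_pos (hf0 z) (hg0 z)) hfinal
    _ = t * Real.log (f x + g x) + s * Real.log (f y + g y) := by
        rw [Real.log_mul hApos.ne' hBpos.ne', Real.log_rpow hA, Real.log_rpow hB]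
    _ = t • Real.log (f x + g x) + s • Real.log (f y + g y) := by simp

/-- A positive constant plus a finite sum of positive log-convex functions is log-convex. -/
lemma logConvexOn_const_add_sum {E : Type*} [AddCommGroup E] [Module ℝ E] {ι : Type*}
    (s : Finset ι) (c : ℝ) (hc : 0 < c) (f : ι → E → ℝ)
    (h0 : ∀ i ∈ s, ∀ x, 0 < f i x)
    (hcv : ∀ i ∈ s, ConvexOn ℝ Set.univ fun x => Real.log (f i x)) :
    ConvexOn ℝ Set.univ fun x => Real.log (c + ∑ i ∈ s, f i x) := by
  classical
  induction s using Finset.induction_on with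
  | empty => simpa using convexOn_const (Real.log c) convex_univ
  | @insert j s' hi ih =>
    have h1 : ∀ x, 0 < c + ∑ i ∈ s', f i x := by
      intro x
      have : 0 ≤ ∑ i ∈ s', f i x :=
        Finset.sum_nonneg fun i his => (h0 i (Finset.mem_insert_of_mem his) x).le
      linarith
    have h2 := logConvexOn_add (f := fun x => c + ∑ i ∈ s', f i x) (g := f j)
      h1 (h0 j (Finset.mem_insert_self j s'))
      (ih (fun i his => h0 i (Finset.mem_insert_of_mem his))
        (fun i his => hcv i (Finset.mem_insert_of_mem his)))
      (hcv j (Finset.mem_insert_self j s'))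
    have heq : (fun x => Real.log (c + ∑ i ∈ insert j s', f i x)) =
        fun x => Real.log (c + ∑ i ∈ s', f i x + f j x) := by
      funext x
      rw [Finset.sum_insert hi]
      ring_nf
    rw [heq]
    exact h2

/-- The function x̃ ↦ log X(e^{x̃}), where X(x) = a - 1 + ∏ (1 + x_k) with a > 0,
is convex on ℝ^n. -/
theorem stmt2 (n : ℕ) (a : ℝ) (ha : 0 < a) :
    ConvexOn ℝ Set.univ
      (fun x : Fin n → ℝ => Real.log (a - 1 + ∏ k, (1 + Real.exp (x k)))) := by
  have expand : ∀ x : Fin n → ℝ,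
      a - 1 + ∏ k, (1 + Real.exp (x k)) =
        a + ∑ t ∈ (Finset.univ : Finset (Finset (Fin n))).erase Finset.univ,
          Real.exp (∑ k ∈ tᶜ, x k) := by
    intro x
    have h1 : ∏ k, (1 + Real.exp (x k)) =
        ∑ t : Finset (Fin n), ∏ k ∈ tᶜ, Real.exp (x k) := by
      rw [Fintype.prod_add (fun _ => (1 : ℝ)) (fun k => Real.exp (x k))]
      simp
    have h2 : ∀ t : Finset (Fin n), ∏ k ∈ tᶜ, Real.exp (x k) = Real.exp (∑ k ∈ tᶜ, x k) := by
      intro t; rw [Real.exp_sum]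
    have h3 : (∑ t : Finset (Fin n), Real.exp (∑ k ∈ tᶜ, x k)) =
        Real.exp (∑ k ∈ (Finset.univ : Finset (Fin n))ᶜ, x k) +
          ∑ t ∈ (Finset.univ : Finset (Finset (Fin n))).erase Finset.univ,
            Real.exp (∑ k ∈ tᶜ, x k) :=
      (Finset.add_sum_erase _ _ (Finset.mem_univ _)).symm
    rw [h1]
    simp only [h2]
    rw [h3]
    simp
    ring
  have hrw : (fun x : Fin n → ℝ => Real.log (a - 1 + ∏ k, (1 + Real.exp (x k)))) =
      fun x : Fin n → ℝ => Real.log (a +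
        ∑ t ∈ (Finset.univ : Finset (Finset (Fin n))).erase Finset.univ,
          Real.exp (∑ k ∈ tᶜ, x k)) := by
    funext x; rw [expand x]
  rw [hrw]
  apply logConvexOn_const_add_sum _ a ha
  · intro t _ x; exact Real.exp_pos _
  · intro t _
    have heq : (fun x : Fin n → ℝ => Real.log (Real.exp (∑ k ∈ tᶜ, x k))) =
        fun x : Fin n → ℝ => ∑ k ∈ tᶜ, x k := by
      funext x; rw [Real.log_exp]
    rw [heq]
    exact ((∑ k ∈ tᶜ, LinearMap.proj k : (Fin n → ℝ) →ₗ[ℝ] ℝ).convexOn convex_univ).congr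
      (by intro x _; simp)
end

section
/- The function f(x̃, π) = −x̃_i − log(∑_{k=1}^{K} π_k v_k) − c + log X(e^{x̃}) is jointly convex in (x̃, π) ∈ ℝ^n × {π : ∑_k π_k v_k > 0}, where c is a constant and X(x) = a − 1 + ∏_{k=1}^n (1+x_k) with a > 0. -/
/-!
With `xₖ = e^{x̃ₖ}`, expanding `∏ (1 + xₖ)` into monomials writes `X(e^{x̃})` as a positive
combination of exponentials of linear forms in `x̃`; its logarithm is convex by Hölder's
inequality. The term `-log (∑ πₖ vₖ)` is the convex function `-log` composed with a linear map,
and `-x̃ᵢ - c` is affine.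
-/

open Finset

theorem Real.sum_rpow_mul_rpow_le {ι : Type*} (u : Finset ι) {f g : ι → ℝ}
    (hf : ∀ j ∈ u, 0 ≤ f j) (hg : ∀ j ∈ u, 0 ≤ g j) {t s : ℝ} (ht : 0 < t) (hs : 0 < s)
    (hts : t + s = 1) :
    ∑ j ∈ u, f j ^ t * g j ^ s ≤ (∑ j ∈ u, f j) ^ t * (∑ j ∈ u, g j) ^ s := by
  have hpq : t⁻¹.HolderConjugate s⁻¹ :=
    Real.holderConjugate_iff.mpr ⟨(one_lt_inv₀ ht).2 (by linarith), by simpa using hts⟩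
  have hrpow_inv {r : ℝ} (hr : 0 < r) {h : ι → ℝ} (hh : ∀ j ∈ u, 0 ≤ h j) :
      ∑ j ∈ u, (h j ^ r) ^ r⁻¹ = ∑ j ∈ u, h j :=
    sum_congr rfl fun j hj => by
      rw [← Real.rpow_mul (hh j hj), mul_inv_cancel₀ hr.ne', Real.rpow_one]
  have := Real.inner_le_Lp_mul_Lq_of_nonneg u hpq (f := fun j => f j ^ t) (g := fun j => g j ^ s)
    (fun j hj => Real.rpow_nonneg (hf j hj) t) (fun j hj => Real.rpow_nonneg (hg j hj) s)
  simpa only [hrpow_inv ht hf, hrpow_inv hs hg, one_div, inv_inv] using this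

theorem convexOn_log_sum_mul_exp {ι E : Type*} [Fintype ι] [Nonempty ι] [AddCommGroup E]
    [Module ℝ E] (w : ι → ℝ) (hw : ∀ j, 0 < w j) (L : ι → E →ₗ[ℝ] ℝ) :
    ConvexOn ℝ Set.univ (fun x => Real.log (∑ j, w j * Real.exp (L j x))) := by
  refine convexOn_iff_forall_pos.2 ⟨convex_univ, fun x _ y _ t s ht hs hts => ?_⟩
  have hpos (z : E) : 0 < ∑ j, w j * Real.exp (L j z) :=
    sum_pos (fun j _ => mul_pos (hw j) (Real.exp_pos _)) univ_nonempty
  have hterm (j : ι) : w j * Real.exp (L j (t • x + s • y))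
      = (w j * Real.exp (L j x)) ^ t * (w j * Real.exp (L j y)) ^ s := by
    rw [Real.mul_rpow (hw j).le (Real.exp_pos _).le, Real.mul_rpow (hw j).le (Real.exp_pos _).le,
      ← Real.exp_mul, ← Real.exp_mul]
    calc w j * Real.exp (L j (t • x + s • y))
        = w j ^ (t + s) * Real.exp (L j x * t + L j y * s) := by
          rw [hts, Real.rpow_one, map_add, map_smul, map_smul, smul_eq_mul, smul_eq_mul,
            mul_comm t, mul_comm s]
      _ = _ := by rw [Real.rpow_add (hw j), Real.exp_add]; ring
  calc Real.log (∑ j, w j * Real.exp (L j (t • x + s • y)))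
      ≤ Real.log ((∑ j, w j * Real.exp (L j x)) ^ t * (∑ j, w j * Real.exp (L j y)) ^ s) := by
        refine Real.log_le_log (hpos _) ?_
        simp only [hterm]
        exact Real.sum_rpow_mul_rpow_le _ (fun j _ => (mul_pos (hw j) (Real.exp_pos _)).le)
          (fun j _ => (mul_pos (hw j) (Real.exp_pos _)).le) ht hs hts
    _ = t • Real.log (∑ j, w j * Real.exp (L j x))
          + s • Real.log (∑ j, w j * Real.exp (L j y)) := by
        rw [Real.log_mul (Real.rpow_pos_of_pos (hpos x) t).ne'
          (Real.rpow_pos_of_pos (hpos y) s).ne', Real.log_rpow (hpos x), Real.log_rpow (hpos y),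
          smul_eq_mul, smul_eq_mul]

theorem Real.prod_one_add_exp {ι : Type*} [Fintype ι] (x : ι → ℝ) :
    ∏ k, (1 + Real.exp (x k)) = ∑ S : Finset ι, Real.exp (∑ k ∈ S, x k) := by
  simp only [prod_one_add, powerset_univ, Real.exp_sum]

theorem convexOn_log_sub_one_add_prod_one_add_exp {ι : Type*} [Fintype ι] {a : ℝ}
    (ha : 0 < a) :
    ConvexOn ℝ Set.univ (fun x : ι → ℝ => Real.log (a - 1 + ∏ k, (1 + Real.exp (x k)))) := by
  classical
  -- The empty monomial `1` of the expanded product absorbs `a - 1`, giving it weight `a`.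
  let w : Finset ι → ℝ := fun S => if S = ∅ then a else 1
  let L : Finset ι → (ι → ℝ) →ₗ[ℝ] ℝ := fun S => ∑ k ∈ S, LinearMap.proj k
  have hw (S : Finset ι) : 0 < w S := by unfold w; split_ifs <;> positivity
  refine (convexOn_log_sum_mul_exp w hw L).congr fun x _ => ?_
  have hterm (S : Finset ι) : w S * Real.exp (L S x)
      = (if S = ∅ then a - 1 else 0) + Real.exp (∑ k ∈ S, x k) := by
    by_cases h : S = ∅ <;> simp [w, L, h]
  simp only [hterm, sum_add_distrib, sum_ite_eq', mem_univ, if_true, Real.prod_one_add_exp]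

theorem stmt4_general (n K : ℕ) (i : Fin n) (v : Fin K → ℝ)
    (c a : ℝ) (ha : 0 < a) :
    ConvexOn ℝ ((Set.univ : Set (Fin n → ℝ)) ×ˢ {π : Fin K → ℝ | 0 < ∑ k, π k * v k})
      (fun p : (Fin n → ℝ) × (Fin K → ℝ) =>
        -p.1 i - Real.log (∑ k, p.2 k * v k) - c
          + Real.log (a - 1 + ∏ k, (1 + Real.exp (p.1 k)))) := by
  set ℓ : (Fin n → ℝ) × (Fin K → ℝ) →ₗ[ℝ] ℝ :=
    Fintype.linearCombination ℝ v ∘ₗ LinearMap.snd ℝ (Fin n → ℝ) (Fin K → ℝ)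
  have hΩ : (Set.univ : Set (Fin n → ℝ)) ×ˢ {π : Fin K → ℝ | 0 < ∑ k, π k * v k}
      = ℓ ⁻¹' Set.Ioi 0 := by
    ext p; simp [ℓ, Fintype.linearCombination_apply]
  rw [hΩ]
  have hlog : ConvexOn ℝ (ℓ ⁻¹' Set.Ioi 0) (fun p => -Real.log (ℓ p)) :=
    strictConcaveOn_log_Ioi.concaveOn.neg.comp_linearMap ℓ
  have hcoord : ConvexOn ℝ (ℓ ⁻¹' Set.Ioi 0) (fun p => -p.1 i - c) :=
    ((-(LinearMap.proj i ∘ₗ LinearMap.fst ℝ _ _)).convexOn hlog.1).add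
      (convexOn_const (-c) hlog.1)
  have hprod := ((convexOn_log_sub_one_add_prod_one_add_exp ha).comp_linearMap
    (LinearMap.fst ℝ (Fin n → ℝ) (Fin K → ℝ))).subset (fun _ _ => trivial) hlog.1
  refine ((hcoord.add hlog).add hprod).congr fun p _ => ?_
  simp [ℓ, Fintype.linearCombination_apply]
  ring

/-- Joint convexity of (x̃, π) ↦ -x̃_i - log(∑ π_k v_k) - c + log X(e^{x̃}),
where X(x) = a - 1 + ∏ (1 + x_k), a > 0, on ℝ^n × {π : ∑ π_k v_k > 0}. -/
theorem stmt4 (n K : ℕ) (i : Fin n) (v : Fin K → ℝ) (hv : ∀ k, 0 ≤ v k)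
    (c a : ℝ) (ha : 0 < a) :
    ConvexOn ℝ ((Set.univ : Set (Fin n → ℝ)) ×ˢ {π : Fin K → ℝ | 0 < ∑ k, π k * v k})
      (fun p : (Fin n → ℝ) × (Fin K → ℝ) =>
        -p.1 i - Real.log (∑ k, p.2 k * v k) - c
          + Real.log (a - 1 + ∏ k, (1 + Real.exp (p.1 k)))) :=
  stmt4_general n K i v c a ha
end

section
/- The optimization problem: maximize ∑_{f∈F} s̃(f) over (x̃, s̃, π) subject to s̃(f) ≤ log((e^{x̃_i}/X(e^{x̃}))·(D_f/T_s)·∑_{k=1}^{K_i} π_{ik} v_{ikf}) for f ∈ F_i, ∑_k π_{ik} = 1, π_{ik} ≥ 0, is a convex optimization problem (convex objective to minimize after negation, convex feasible set), assuming for each flow f there exists k with π_{ik} > 0 and v_{ikf} > 0 on the feasible set considered. -/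
open Finset

/-- Weighted log-sum-exp convexity (two-point Hölder inequality). -/
lemma lse_aux {ι : Type*} [Fintype ι] [Nonempty ι] (w : ι → ℝ) (hw : ∀ i, 0 < w i)
    (A B : ι → ℝ) {θ μ : ℝ} (hθ : 0 ≤ θ) (hμ : 0 ≤ μ) (hθμ : θ + μ = 1) :
    Real.log (∑ i, w i * Real.exp (θ * A i + μ * B i)) ≤
      θ * Real.log (∑ i, w i * Real.exp (A i)) + μ * Real.log (∑ i, w i * Real.exp (B i)) := by
  set SA := ∑ i, w i * Real.exp (A i) with hSA
  set SB := ∑ i, w i * Real.exp (B i) with hSB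
  have hSApos : 0 < SA := Finset.sum_pos (fun i _ => mul_pos (hw i) (Real.exp_pos _)) univ_nonempty
  have hSBpos : 0 < SB := Finset.sum_pos (fun i _ => mul_pos (hw i) (Real.exp_pos _)) univ_nonempty
  have key : ∑ i, w i * Real.exp (θ * A i + μ * B i) ≤ SA ^ θ * SB ^ μ := by
    have hterm : ∀ i : ι, w i * Real.exp (θ * A i + μ * B i) ≤
        SA ^ θ * SB ^ μ * (θ * (w i * Real.exp (A i) / SA) + μ * (w i * Real.exp (B i) / SB)) := by
      intro i
      have hwa : 0 < w i * Real.exp (A i) := mul_pos (hw i) (Real.exp_pos _)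
      have hwb : 0 < w i * Real.exp (B i) := mul_pos (hw i) (Real.exp_pos _)
      have young := Real.geom_mean_le_arith_mean2_weighted hθ hμ
        (div_nonneg hwa.le hSApos.le) (div_nonneg hwb.le hSBpos.le) hθμ
      have hlhs : (w i * Real.exp (A i) / SA) ^ θ * (w i * Real.exp (B i) / SB) ^ μ =
          w i * Real.exp (θ * A i + μ * B i) / (SA ^ θ * SB ^ μ) := by
        rw [Real.div_rpow hwa.le hSApos.le, Real.div_rpow hwb.le hSBpos.le,
          div_mul_div_comm, Real.mul_rpow (hw i).le (Real.exp_pos _).le,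
          Real.mul_rpow (hw i).le (Real.exp_pos _).le]
        congr 1
        rw [mul_mul_mul_comm, ← Real.rpow_add (hw i), hθμ, Real.rpow_one,
          ← Real.exp_one_rpow (A i), ← Real.exp_one_rpow (B i),
          ← Real.rpow_mul (Real.exp_pos 1).le,
          ← Real.rpow_mul (Real.exp_pos 1).le, ← Real.rpow_add (Real.exp_pos 1),
          Real.exp_one_rpow, mul_comm (A i) θ, mul_comm (B i) μ]
      rw [hlhs] at young
      have hpos : 0 < SA ^ θ * SB ^ μ :=
        mul_pos (Real.rpow_pos_of_pos hSApos _) (Real.rpow_pos_of_pos hSBpos _)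
      calc w i * Real.exp (θ * A i + μ * B i)
          = SA ^ θ * SB ^ μ * (w i * Real.exp (θ * A i + μ * B i) / (SA ^ θ * SB ^ μ)) := by
            field_simp
        _ ≤ _ := by
            apply mul_le_mul_of_nonneg_left young hpos.le
    calc ∑ i, w i * Real.exp (θ * A i + μ * B i)
        ≤ ∑ i, SA ^ θ * SB ^ μ * (θ * (w i * Real.exp (A i) / SA) + μ * (w i * Real.exp (B i) / SB)) :=
          Finset.sum_le_sum fun i _ => hterm i
      _ = SA ^ θ * SB ^ μ := by
          rw [← Finset.mul_sum]
          have : ∑ i : ι, (θ * (w i * Real.exp (A i) / SA) + μ * (w i * Real.exp (B i) / SB)) = 1 := by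
            rw [Finset.sum_add_distrib]
            simp_rw [mul_div_assoc', ← Finset.sum_div, ← Finset.mul_sum, ← hSA, ← hSB]
            rw [mul_div_assoc, mul_div_assoc, div_self hSApos.ne', div_self hSBpos.ne', mul_one, mul_one, hθμ]
          rw [this, mul_one]
  calc Real.log (∑ i, w i * Real.exp (θ * A i + μ * B i))
      ≤ Real.log (SA ^ θ * SB ^ μ) :=
        Real.log_le_log (Finset.sum_pos (fun i _ => mul_pos (hw i) (Real.exp_pos _)) univ_nonempty) key
    _ = θ * Real.log SA + μ * Real.log SB := by
        rw [Real.log_mul (Real.rpow_pos_of_pos hSApos _).ne' (Real.rpow_pos_of_pos hSBpos _).ne',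
          Real.log_rpow hSApos, Real.log_rpow hSBpos]

lemma repr_aux (n : ℕ) (a : ℝ) (x : Fin n → ℝ) :
    a - 1 + ∏ j, (1 + Real.exp (x j)) =
      ∑ t : Finset (Fin n), (if t = Finset.univ then a else 1) * Real.exp (∑ j ∈ tᶜ, x j) := by
  have hprod : ∏ j, (1 + Real.exp (x j)) = ∑ t : Finset (Fin n), Real.exp (∑ j ∈ tᶜ, x j) := by
    rw [Finset.prod_add]
    rw [← Finset.powerset_univ]
    refine Finset.sum_congr rfl fun t ht => ?_
    rw [Finset.prod_const_one, one_mul, Real.exp_sum, Finset.compl_eq_univ_sdiff]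
  have hsplit : ∀ t : Finset (Fin n),
      (if t = Finset.univ then a else 1) * Real.exp (∑ j ∈ tᶜ, x j) =
        Real.exp (∑ j ∈ tᶜ, x j) +
          (if t = Finset.univ then a - 1 else 0) * Real.exp (∑ j ∈ tᶜ, x j) := by
    intro t; split <;> ring
  simp_rw [hsplit]
  rw [Finset.sum_add_distrib, ← hprod]
  have : ∑ t : Finset (Fin n), (if t = Finset.univ then a - 1 else 0) * Real.exp (∑ j ∈ tᶜ, x j)
      = (a - 1) * Real.exp (∑ j ∈ (Finset.univ : Finset (Fin n))ᶜ, x j) := by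
    rw [Finset.sum_eq_single Finset.univ]
    · simp
    · intro t _ hne; simp [hne]
    · simp
  rw [this, Finset.compl_univ]
  simp [add_comm]

lemma logX_convex (n : ℕ) (a : ℝ) (ha : 0 < a) (x y : Fin n → ℝ) {θ μ : ℝ}
    (hθ : 0 ≤ θ) (hμ : 0 ≤ μ) (hθμ : θ + μ = 1) :
    Real.log (a - 1 + ∏ j, (1 + Real.exp (θ * x j + μ * y j))) ≤
      θ * Real.log (a - 1 + ∏ j, (1 + Real.exp (x j))) +
        μ * Real.log (a - 1 + ∏ j, (1 + Real.exp (y j))) := by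
  have hw : ∀ t : Finset (Fin n), 0 < (if t = Finset.univ then a else 1) := by
    intro t; split <;> [exact ha; exact one_pos]
  have hlin : ∀ t : Finset (Fin n),
      ∑ j ∈ tᶜ, (θ * x j + μ * y j) = θ * (∑ j ∈ tᶜ, x j) + μ * (∑ j ∈ tᶜ, y j) := by
    intro t
    rw [Finset.sum_add_distrib, Finset.mul_sum, Finset.mul_sum]
  rw [repr_aux, repr_aux, repr_aux]
  simp_rw [hlin]
  exact lse_aux _ hw (fun t => ∑ j ∈ tᶜ, x j) (fun t => ∑ j ∈ tᶜ, y j) hθ hμ hθμ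

/-- The proportional-fair MU-MIMO optimisation problem is convex: the feasible set
(in the transformed variables x̃, s̃, π, including the constraint that each flow's
average spatial-stream count is positive) is a convex set, and the objective
∑_f s̃(f) is concave (indeed linear) on it. -/
theorem stmt9 (n : ℕ) (Φ : Type) [Fintype Φ] (st : Φ → Fin n)
    (K : Fin n → ℕ) (v : (i : Fin n) → Fin (K i) → Φ → ℝ)
    (hv : ∀ i k f, 0 ≤ v i k f)
    (D : Φ → ℝ) (hD : ∀ f, 0 < D f) (Ts : ℝ) (hTs : 0 < Ts)
    (a : ℝ) (ha : 0 < a)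
    (S : Set ((Fin n → ℝ) × (Φ → ℝ) × ((i : Fin n) → Fin (K i) → ℝ)))
    (hS : S = {p | (∀ f, p.2.1 f ≤
          Real.log (Real.exp (p.1 (st f))
            / (a - 1 + ∏ j, (1 + Real.exp (p.1 j))) * (D f / Ts)
            * ∑ k, p.2.2 (st f) k * v (st f) k f)) ∧
        (∀ i, ∑ k, p.2.2 i k = 1) ∧ (∀ i k, 0 ≤ p.2.2 i k) ∧
        (∀ f, 0 < ∑ k, p.2.2 (st f) k * v (st f) k f)}) :
    Convex ℝ S ∧ ConcaveOn ℝ S (fun p => ∑ f, p.2.1 f) := by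
  have hXpos : ∀ x : Fin n → ℝ, 0 < a - 1 + ∏ j, (1 + Real.exp (x j)) := by
    intro x
    have h1 : (1:ℝ) ≤ ∏ j, (1 + Real.exp (x j)) := by
      calc (1:ℝ) = ∏ _j : Fin n, 1 := Finset.prod_const_one.symm
        _ ≤ ∏ j, (1 + Real.exp (x j)) :=
          Finset.prod_le_prod (fun i _ => zero_le_one)
            (fun i _ => by nlinarith [Real.exp_pos (x i)])
    linarith
  have hexp : ∀ (f : Φ) (x : Fin n → ℝ) (P : ℝ), 0 < P →
      Real.log (Real.exp (x (st f)) / (a - 1 + ∏ j, (1 + Real.exp (x j))) * (D f / Ts) * P)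
        = x (st f) - Real.log (a - 1 + ∏ j, (1 + Real.exp (x j)))
          + Real.log (D f / Ts) + Real.log P := by
    intro f x P hP
    have hc : 0 < D f / Ts := div_pos (hD f) hTs
    have hA : 0 < Real.exp (x (st f)) / (a - 1 + ∏ j, (1 + Real.exp (x j))) :=
      div_pos (Real.exp_pos _) (hXpos x)
    rw [Real.log_mul (mul_pos hA hc).ne' hP.ne', Real.log_mul hA.ne' hc.ne',
      Real.log_div (Real.exp_pos _).ne' (hXpos x).ne', Real.log_exp]
  have hconv : Convex ℝ S := by
    subst hS
    intro p hp q hq θ μ hθ hμ hθμ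
    obtain ⟨hp1, hp2, hp3, hp4⟩ := hp
    obtain ⟨hq1, hq2, hq3, hq4⟩ := hq
    have hPcombo : ∀ f : Φ,
        ∑ k, (θ * p.2.2 (st f) k + μ * q.2.2 (st f) k) * v (st f) k f
          = θ * (∑ k, p.2.2 (st f) k * v (st f) k f)
            + μ * (∑ k, q.2.2 (st f) k * v (st f) k f) := by
      intro f
      simp_rw [add_mul, Finset.sum_add_distrib, Finset.mul_sum, mul_assoc]
    have hPpos : ∀ f : Φ, 0 < θ * (∑ k, p.2.2 (st f) k * v (st f) k f)
        + μ * (∑ k, q.2.2 (st f) k * v (st f) k f) := by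
      intro f
      rcases hθ.eq_or_lt with h0 | h0
      · have hμ1 : μ = 1 := by linarith
        rw [← h0, hμ1]; simpa using hq4 f
      · exact add_pos_of_pos_of_nonneg (mul_pos h0 (hp4 f))
          (mul_nonneg hμ (hq4 f).le)
    refine ⟨?_, ?_, ?_, ?_⟩ <;>
      simp only [Set.mem_setOf_eq, Prod.fst_add, Prod.snd_add, Prod.smul_fst, Prod.smul_snd,
        Pi.add_apply, Pi.smul_apply, smul_eq_mul]
    · intro f
      rw [hPcombo f]
      have hE : Real.log (Real.exp (θ * p.1 (st f) + μ * q.1 (st f))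
            / (a - 1 + ∏ j, (1 + Real.exp (θ * p.1 j + μ * q.1 j))) * (D f / Ts)
            * (θ * (∑ k, p.2.2 (st f) k * v (st f) k f)
              + μ * (∑ k, q.2.2 (st f) k * v (st f) k f)))
          = (θ * p.1 (st f) + μ * q.1 (st f))
            - Real.log (a - 1 + ∏ j, (1 + Real.exp (θ * p.1 j + μ * q.1 j)))
            + Real.log (D f / Ts)
            + Real.log (θ * (∑ k, p.2.2 (st f) k * v (st f) k f)
              + μ * (∑ k, q.2.2 (st f) k * v (st f) k f)) :=
        hexp f (fun j => θ * p.1 j + μ * q.1 j) _ (hPpos f)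
      rw [hE]
      have h1 := logX_convex n a ha p.1 q.1 hθ hμ hθμ
      have h2 := strictConcaveOn_log_Ioi.concaveOn.2 (Set.mem_Ioi.2 (hp4 f))
        (Set.mem_Ioi.2 (hq4 f)) hθ hμ hθμ
      simp only [smul_eq_mul] at h2
      have h3 := hp1 f
      have h4 := hq1 f
      rw [hexp f _ _ (hp4 f)] at h3
      rw [hexp f _ _ (hq4 f)] at h4
      have h5 := mul_le_mul_of_nonneg_left h3 hθ
      have h6 := mul_le_mul_of_nonneg_left h4 hμ
      have hc : θ * Real.log (D f / Ts) + μ * Real.log (D f / Ts) = Real.log (D f / Ts) := by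
        rw [← add_mul, hθμ, one_mul]
      linarith [h1, h2, h5, h6, hc]
    · intro i
      rw [Finset.sum_add_distrib, ← Finset.mul_sum, ← Finset.mul_sum, hp2 i, hq2 i]
      linarith
    · intro i k
      exact add_nonneg (mul_nonneg hθ (hp3 i k)) (mul_nonneg hμ (hq3 i k))
    · intro f
      rw [hPcombo f]
      exact hPpos f
  refine ⟨hconv, hconv, ?_⟩
  intro p _ q _ θ μ hθ hμ hθμ
  apply le_of_eq
  simp only [Prod.snd_add, Prod.smul_snd, Prod.fst_add, Prod.smul_fst, Pi.add_apply,
    Pi.smul_apply, smul_eq_mul]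
  rw [Finset.sum_add_distrib, ← Finset.mul_sum, ← Finset.mul_sum]
end
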